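/- arXiv:1508.05448 — 7 statements merged into one kernel-verified Lean document; each statement's English description precedes it below -/
import Mathlib

section
/- For every real r with 0 \le r \le 1, the infimum over t in [0,1] of r^{-t} exp((1-t)^2/4) is at most 2 - r. -/
open Real

lemma exp_cubic_bound {x : ℝ} (h0 : 0 ≤ x) (h1 : x ≤ 1) :
    Real.exp x ≤ 1 + x + x ^ 2 / 2 + 2 * x ^ 3 / 9 := by
  have h := Real.exp_bound' h0 h1 (n := 3) (by norm_num)
  simp [Finset.sum_range_succ, Nat.factorial] at h
  nlinarith [h]

lemma exp_neg_cubic_bound {u : ℝ} (h0 : 0 ≤ u) (h1 : u ≤ 1) :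
    Real.exp (-u) ≤ 1 - u + u ^ 2 / 2 + 2 * u ^ 3 / 9 := by
  have habs : |(-u)| ≤ 1 := by rw [abs_neg, abs_of_nonneg h0]; exact h1
  have h := Real.exp_bound habs (n := 3) (by norm_num)
  have h2 := (abs_le.1 h).2
  simp [Finset.sum_range_succ, Nat.factorial, abs_neg, abs_of_nonneg h0] at h2
  nlinarith [h2]

lemma key_ineq {u : ℝ} (h0 : 0 ≤ u) (h1 : u ≤ 1 / 2) :
    Real.exp (u - u ^ 2) + Real.exp (-u) ≤ 2 := by
  have hx0 : 0 ≤ u - u ^ 2 := by nlinarith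
  have hx1 : u - u ^ 2 ≤ 1 := by nlinarith
  have e1 := exp_cubic_bound hx0 hx1
  have e2 := exp_neg_cubic_bound h0 (by linarith)
  nlinarith [e1, e2, pow_nonneg h0 3, pow_nonneg h0 4, sq_nonneg u,
    mul_nonneg (pow_nonneg h0 3) (by linarith : (0:ℝ) ≤ 1/2 - u),
    mul_nonneg (mul_nonneg (pow_nonneg h0 3) h0) (by nlinarith : (0:ℝ) ≤ 1 - (1-u)^3)]

theorem stmt_1 (r : ℝ) (hr : 0 ≤ r) (hr1 : r ≤ 1) :
    sInf ((fun t : ℝ => r ^ (-t) * Real.exp ((1 - t) ^ 2 / 4)) '' Set.Icc (0:ℝ) 1)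
      ≤ 2 - r := by
  have hbdd : BddBelow ((fun t : ℝ => r ^ (-t) * Real.exp ((1 - t) ^ 2 / 4)) '' Set.Icc (0:ℝ) 1) := by
    refine ⟨0, fun y hy => ?_⟩
    rcases hy with ⟨t, _, rfl⟩
    positivity
  by_cases hcase : Real.exp (-(1/2)) ≤ r
  · -- r ≥ e^{-1/2}, pick t = 1 + 2 log r
    have hrpos : 0 < r := lt_of_lt_of_le (Real.exp_pos _) hcase
    set s := Real.log r with hs
    have hs0 : s ≤ 0 := Real.log_nonpos hr hr1
    have hsl : -(1/2) ≤ s := (Real.le_log_iff_exp_le hrpos).2 hcase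
    set t := 1 + 2 * s with ht
    have htmem : t ∈ Set.Icc (0:ℝ) 1 := ⟨by linarith, by linarith⟩
    have hval : r ^ (-t) * Real.exp ((1 - t) ^ 2 / 4) = Real.exp (-s - s ^ 2) := by
      rw [Real.rpow_def_of_pos hrpos, ← Real.exp_add]
      congr 1
      rw [← hs]; ring
    have hle : Real.exp (-s - s ^ 2) ≤ 2 - r := by
      have hru : r = Real.exp s := (Real.exp_log hrpos).symm
      set u := -s with hu
      have h0 : 0 ≤ u := by linarith
      have h1 : u ≤ 1 / 2 := by simp only [hu]; linarith
      have := key_ineq h0 h1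
      have heq : -s - s ^ 2 = u - u ^ 2 := by simp only [hu]; ring
      rw [heq, hru]
      have : Real.exp s = Real.exp (-u) := by simp [hu]
      linarith [key_ineq h0 h1, this ▸ (le_refl (Real.exp s))]
    calc sInf _ ≤ r ^ (-t) * Real.exp ((1 - t) ^ 2 / 4) :=
          csInf_le hbdd ⟨t, htmem, rfl⟩
      _ = Real.exp (-s - s ^ 2) := hval
      _ ≤ 2 - r := hle
  · -- r ≤ e^{-1/2}, pick t = 0
    push_neg at hcase
    have hval : r ^ (-(0:ℝ)) * Real.exp ((1 - 0) ^ 2 / 4) = Real.exp (1/4) := by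
      rw [neg_zero, Real.rpow_zero]; norm_num
    have h14 : Real.exp (1/4 : ℝ) ≤ 4/3 := by
      have h1 : (3/4:ℝ) ≤ Real.exp (-(1/4)) := by linarith [Real.add_one_le_exp (-(1/4) : ℝ)]
      have h2 : Real.exp (-(1/4)) * Real.exp (1/4) = 1 := by rw [← Real.exp_add]; norm_num
      nlinarith [Real.exp_pos (1/4 : ℝ)]
    have h12 : Real.exp (-(1/2) : ℝ) ≤ 2/3 := by
      have h1 : (3/2:ℝ) ≤ Real.exp (1/2) := by linarith [Real.add_one_le_exp (1/2 : ℝ)]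
      have h2 : Real.exp (-(1/2)) * Real.exp (1/2) = 1 := by rw [← Real.exp_add]; norm_num
      nlinarith [Real.exp_pos (-(1/2) : ℝ)]
    have : r ≤ 2/3 := le_trans hcase.le h12
    calc sInf _ ≤ r ^ (-(0:ℝ)) * Real.exp ((1 - 0) ^ 2 / 4) :=
          csInf_le hbdd ⟨0, Set.mem_Icc.2 ⟨le_refl 0, zero_le_one⟩, rfl⟩
      _ = Real.exp (1/4) := hval
      _ ≤ 2 - r := by linarith
end

section
/- Let (\Pi, \mu) be an irreducible reversible Markov chain on a finite state space X with spectral gap \lambda_1 > 0. If F : X \to \mathbb{R} satisfies the triple-norm bound (1/2) \sup_{x} \sum_{y} |F(x) - F(y)|^2 \Pi(x,y) \le 1, then for every r \ge 0, \mu(\{x : F(x) \ge \int F d\mu + r\}) \le 3 e^{-r \sqrt{\lambda_1}/2}. -/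
/-!
Herbst-type argument for the Laplace transform `Λ(t) = ∑ₓ μ x exp (t F x)` of the centred
function. Applying the Poincaré inequality to `exp (t F / 2)`, whose variance is
`Λ(t) - Λ(t/2)²` and whose Dirichlet form is at most `t² Λ(t) / 2` by the triple-norm bound
and reversibility, gives `Λ(t) ≤ exp (t² / λ₁) Λ(t/2)²` for `|t| ≤ √λ₁`. Iterating,
`Λ(t) ≤ exp (2 t² / λ₁) Λ(t/2ⁿ)^(2ⁿ)`, and the last factor tends to `1` because `F` has mean
zero. Taking `t = √λ₁ / 2` gives `Λ(t) ≤ exp (1/2) ≤ 3`, and Chebyshev's exponential inequality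
concludes.
-/

open Finset Filter Topology Real

theorem sq_exp_sub_exp_le_of_le {a b : ℝ} (h : b ≤ a) :
    (exp a - exp b) ^ 2 ≤ (a - b) ^ 2 * exp (2 * a) := by
  have hdiff : exp a - exp b ≤ exp a * (a - b) := by
    have hexp : exp b = exp a * exp (b - a) := by rw [← exp_add]; ring_nf
    nlinarith [add_one_le_exp (b - a), exp_pos a]
  have h2a : exp (2 * a) = exp a ^ 2 := by rw [← exp_nat_mul]; norm_num
  calc (exp a - exp b) ^ 2 ≤ (exp a * (a - b)) ^ 2 :=
        pow_le_pow_left₀ (sub_nonneg.2 (exp_le_exp.2 h)) hdiff 2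
    _ = (a - b) ^ 2 * exp (2 * a) := by rw [h2a]; ring

theorem sq_exp_sub_exp_le (a b : ℝ) :
    (exp a - exp b) ^ 2 ≤ (a - b) ^ 2 * (exp (2 * a) + exp (2 * b)) := by
  rcases le_total b a with h | h
  · nlinarith [sq_exp_sub_exp_le_of_le h, exp_pos (2 * b), sq_nonneg (a - b)]
  · nlinarith [sq_exp_sub_exp_le_of_le h, exp_pos (2 * a), sq_nonneg (a - b)]

theorem exp_le_one_add_add_sq {x : ℝ} (hx : |x| ≤ 1) : exp x ≤ 1 + x + x ^ 2 := by
  linarith [(abs_le.1 (abs_exp_sub_one_sub_id_le hx)).2]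

theorem one_le_exp_two_mul_mul_one_sub {θ : ℝ} (h0 : 0 ≤ θ) (h1 : θ ≤ 1 / 2) :
    1 ≤ exp (2 * θ) * (1 - θ) := by
  nlinarith [add_one_le_exp (2 * θ)]

/-- Iterating `Λ u ≤ exp (c u²) Λ (u/2)²`; the exponents `c t² 2⁻ᵏ` sum to at most `2 c t²`. -/
theorem le_exp_mul_pow_of_le_exp_mul_sq {Λ : ℝ → ℝ} {c T : ℝ} (hc : 0 ≤ c)
    (hΛ : ∀ u, 0 ≤ Λ u) (hstep : ∀ u, |u| ≤ T → Λ u ≤ exp (c * u ^ 2) * Λ (u / 2) ^ 2)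
    (n : ℕ) : ∀ t, |t| ≤ T → Λ t ≤ exp (2 * c * t ^ 2) * Λ (t / 2 ^ n) ^ 2 ^ n := by
  induction n with
  | zero =>
    intro t _
    simpa using le_mul_of_one_le_left (hΛ t) (one_le_exp (by positivity : 0 ≤ 2 * c * t ^ 2))
  | succ n ih =>
    intro t ht
    have hhalf : |t / 2| ≤ T := by rw [abs_div, abs_two]; linarith [abs_nonneg t]
    calc Λ t ≤ exp (c * t ^ 2) * Λ (t / 2) ^ 2 := hstep t ht
      _ ≤ exp (c * t ^ 2) * (exp (2 * c * (t / 2) ^ 2) * Λ (t / 2 / 2 ^ n) ^ 2 ^ n) ^ 2 := by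
        gcongr
        · exact hΛ _
        · exact ih _ hhalf
      _ = exp (2 * c * t ^ 2) * Λ (t / 2 ^ (n + 1)) ^ 2 ^ (n + 1) := by
        rw [mul_pow, ← exp_nat_mul, ← mul_assoc, ← exp_add, ← pow_mul, div_div, ← pow_succ',
          pow_succ]
        congr 2
        ring

noncomputable section FiniteChain

variable {X : Type*} [Fintype X]

theorem sum_mul_sub_sum_sq {μ : X → ℝ} (hμsum : ∑ x, μ x = 1) (f : X → ℝ) :
    ∑ x, μ x * (f x - ∑ y, μ y * f y) ^ 2 = ∑ x, μ x * f x ^ 2 - (∑ x, μ x * f x) ^ 2 := by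
  set m := ∑ y, μ y * f y
  calc ∑ x, μ x * (f x - m) ^ 2
        = ∑ x, μ x * f x ^ 2 - 2 * m * ∑ x, μ x * f x + m ^ 2 * ∑ x, μ x := by
        simp only [mul_sum, ← sum_sub_distrib, ← sum_add_distrib]
        exact sum_congr rfl fun x _ => by ring
    _ = ∑ x, μ x * f x ^ 2 - m ^ 2 := by rw [hμsum]; ring

theorem sum_sum_swap_of_reversible {P : Matrix X X ℝ} {μ : X → ℝ}
    (hrev : ∀ x y, μ x * P x y = μ y * P y x) (g : X → X → ℝ) :
    ∑ x, ∑ y, g y x * μ x * P x y = ∑ x, ∑ y, g x y * μ x * P x y := by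
  rw [sum_comm]
  refine sum_congr rfl fun y _ => sum_congr rfl fun x _ => ?_
  rw [mul_assoc, hrev, mul_assoc]

def dirichletForm (P : Matrix X X ℝ) (μ f : X → ℝ) : ℝ :=
  (1 / 2) * ∑ x, ∑ y, (f x - f y) ^ 2 * μ x * P x y

def expMoment (μ F : X → ℝ) (t : ℝ) : ℝ :=
  ∑ x, μ x * exp (t * F x)

variable {μ : X → ℝ}

theorem expMoment_nonneg (hμ : ∀ x, 0 ≤ μ x) (F : X → ℝ) (t : ℝ) : 0 ≤ expMoment μ F t :=
  sum_nonneg fun x _ => mul_nonneg (hμ x) (exp_pos _).le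

theorem one_le_expMoment (hμ : ∀ x, 0 ≤ μ x) (hμsum : ∑ x, μ x = 1) {F : X → ℝ}
    (hmean : ∑ x, μ x * F x = 0) (t : ℝ) : 1 ≤ expMoment μ F t := by
  calc (1 : ℝ) = ∑ x, μ x * (t * F x + 1) := by
        simp only [mul_add, mul_one, sum_add_distrib, mul_left_comm _ t, ← mul_sum, hmean, hμsum]
        ring
    _ ≤ expMoment μ F t :=
        sum_le_sum fun x _ => mul_le_mul_of_nonneg_left (add_one_le_exp _) (hμ x)

theorem expMoment_le_exp_sq (hμ : ∀ x, 0 ≤ μ x) (hμsum : ∑ x, μ x = 1) {F : X → ℝ}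
    (hmean : ∑ x, μ x * F x = 0) {t : ℝ} (ht : ∀ x, |t * F x| ≤ 1) :
    expMoment μ F t ≤ exp (t ^ 2 * ∑ x, μ x * F x ^ 2) := by
  calc expMoment μ F t ≤ ∑ x, μ x * (1 + t * F x + (t * F x) ^ 2) :=
        sum_le_sum fun x _ => mul_le_mul_of_nonneg_left (exp_le_one_add_add_sq (ht x)) (hμ x)
    _ = t ^ 2 * (∑ x, μ x * F x ^ 2) + 1 := by
        simp only [mul_add, mul_one, sum_add_distrib, mul_left_comm _ t, mul_pow,
          mul_left_comm _ (t ^ 2), ← mul_sum, hmean, hμsum]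
        ring
    _ ≤ exp (t ^ 2 * ∑ x, μ x * F x ^ 2) := add_one_le_exp _

theorem tendsto_expMoment_div_two_pow_pow (hμ : ∀ x, 0 ≤ μ x) (hμsum : ∑ x, μ x = 1)
    {F : X → ℝ} (hmean : ∑ x, μ x * F x = 0) (t : ℝ) :
    Tendsto (fun n : ℕ => expMoment μ F (t / 2 ^ n) ^ 2 ^ n) atTop (𝓝 1) := by
  set V := ∑ x, μ x * F x ^ 2
  have hsmall : Tendsto (fun n : ℕ => t / 2 ^ n) atTop (𝓝 0) :=
    tendsto_const_nhds.div_atTop (tendsto_pow_atTop_atTop_of_one_lt one_lt_two)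
  have hupper : Tendsto (fun n : ℕ => exp (t ^ 2 * V / 2 ^ n)) atTop (𝓝 1) := by
    simpa using (tendsto_const_nhds.div_atTop
      (tendsto_pow_atTop_atTop_of_one_lt one_lt_two)).rexp
  refine tendsto_of_tendsto_of_tendsto_of_le_of_le' tendsto_const_nhds hupper
    (Eventually.of_forall fun n => one_le_pow₀ (one_le_expMoment hμ hμsum hmean _)) ?_
  have hbound : ∀ᶠ n : ℕ in atTop, ∀ x, |t / 2 ^ n * F x| ≤ 1 :=
    eventually_all.2 fun x => (hsmall.mul_const (F x)).abs.eventually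
      (ge_mem_nhds (by norm_num : |(0 : ℝ) * F x| < 1))
  filter_upwards [hbound] with n hn
  calc expMoment μ F (t / 2 ^ n) ^ 2 ^ n ≤ exp ((t / 2 ^ n) ^ 2 * V) ^ 2 ^ n :=
        pow_le_pow_left₀ (expMoment_nonneg hμ F _) (expMoment_le_exp_sq hμ hμsum hmean hn) _
    _ = exp (t ^ 2 * V / 2 ^ n) := by
        rw [← exp_nat_mul]
        congr 1
        push_cast
        field_simp

theorem sum_filter_le_exp_mul_expMoment (hμ : ∀ x, 0 ≤ μ x) (F : X → ℝ) {s : ℝ} (hs : 0 ≤ s)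
    (a : ℝ) : ∑ x ∈ univ.filter (fun x => a ≤ F x), μ x ≤ exp (-(s * a)) * expMoment μ F s := by
  have hrw : exp (-(s * a)) * expMoment μ F s = ∑ x, μ x * exp (s * (F x - a)) := by
    rw [expMoment, mul_sum]
    refine sum_congr rfl fun x _ => ?_
    rw [mul_left_comm, ← exp_add]
    ring_nf
  rw [hrw]
  calc ∑ x ∈ univ.filter (fun x => a ≤ F x), μ x
      ≤ ∑ x ∈ univ.filter (fun x => a ≤ F x), μ x * exp (s * (F x - a)) := by
        refine sum_le_sum fun x hx => le_mul_of_one_le_right (hμ x) (one_le_exp ?_)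
        exact mul_nonneg hs (sub_nonneg.2 (mem_filter.1 hx).2)
    _ ≤ ∑ x, μ x * exp (s * (F x - a)) :=
        sum_le_sum_of_subset_of_nonneg (filter_subset _ _)
          fun x _ _ => mul_nonneg (hμ x) (exp_pos _).le

variable {P : Matrix X X ℝ}

theorem dirichletForm_exp_half_le (hP : ∀ x y, 0 ≤ P x y) (hμ : ∀ x, 0 ≤ μ x)
    (hrev : ∀ x y, μ x * P x y = μ y * P y x) {F : X → ℝ}
    (hF : ∀ x, ∑ y, (F x - F y) ^ 2 * P x y ≤ 2) (t : ℝ) :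
    dirichletForm P μ (fun x => exp (t / 2 * F x)) ≤ t ^ 2 / 2 * expMoment μ F t := by
  set g : X → X → ℝ := fun x y => (t / 2 * F x - t / 2 * F y) ^ 2 * exp (t * F x)
  have hpoint : ∀ x y, (exp (t / 2 * F x) - exp (t / 2 * F y)) ^ 2 ≤ g x y + g y x := by
    intro x y
    have h := sq_exp_sub_exp_le (t / 2 * F x) (t / 2 * F y)
    simp only [show ∀ z, 2 * (t / 2 * z) = t * z from fun z => by ring] at h
    exact h.trans_eq (by ring)
  calc dirichletForm P μ (fun x => exp (t / 2 * F x))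
      ≤ 1 / 2 * ∑ x, ∑ y, (g x y + g y x) * μ x * P x y := by
        unfold dirichletForm
        gcongr with x _ y _
        · exact hP x y
        · exact hμ x
        · exact hpoint x y
    _ = ∑ x, ∑ y, g x y * μ x * P x y := by
        simp only [add_mul, sum_add_distrib]
        rw [sum_sum_swap_of_reversible hrev g]
        ring
    _ = ∑ x, t ^ 2 / 4 * (μ x * exp (t * F x)) * ∑ y, (F x - F y) ^ 2 * P x y := by
        simp only [g, mul_sum]
        exact sum_congr rfl fun x _ => sum_congr rfl fun y _ => by ring
    _ ≤ ∑ x, t ^ 2 / 4 * (μ x * exp (t * F x)) * 2 := by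
        gcongr with x
        · exact mul_nonneg (by positivity) (mul_nonneg (hμ x) (exp_pos _).le)
        · exact hF x
    _ = t ^ 2 / 2 * expMoment μ F t := by
        rw [expMoment, mul_sum]
        exact sum_congr rfl fun x _ => by ring

section Poincare

variable (hP : ∀ x y, 0 ≤ P x y) (hμ : ∀ x, 0 ≤ μ x) (hμsum : ∑ x, μ x = 1)
  (hrev : ∀ x y, μ x * P x y = μ y * P y x) {lam : ℝ} (hlam : 0 < lam)
  (hPoincare : ∀ f : X → ℝ, lam * ∑ x, μ x * (f x - ∑ y, μ y * f y) ^ 2 ≤ dirichletForm P μ f)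
  {F : X → ℝ} (hF : ∀ x, ∑ y, (F x - F y) ^ 2 * P x y ≤ 2)
include hP hμ hμsum hrev hlam hPoincare hF

/-- The Poincaré inequality applied to `exp (t F / 2)`. -/
theorem expMoment_le_exp_mul_expMoment_half_sq {t : ℝ} (ht : |t| ≤ √lam) :
    expMoment μ F t ≤ exp (lam⁻¹ * t ^ 2) * expMoment μ F (t / 2) ^ 2 := by
  set θ := t ^ 2 / (2 * lam)
  have hθ : θ ≤ 1 / 2 := by
    have : t ^ 2 ≤ lam := by
      simpa [sq_abs, sq_sqrt hlam.le] using pow_le_pow_left₀ (abs_nonneg t) ht 2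
    rw [div_le_iff₀ (by positivity)]
    linarith
  have hvar : ∑ x, μ x * (exp (t / 2 * F x) - ∑ y, μ y * exp (t / 2 * F y)) ^ 2 =
      expMoment μ F t - expMoment μ F (t / 2) ^ 2 := by
    rw [sum_mul_sub_sum_sq hμsum, expMoment, expMoment]
    congr 1
    refine sum_congr rfl fun x _ => ?_
    rw [← exp_nat_mul]
    ring_nf
  have hgap : expMoment μ F t - expMoment μ F (t / 2) ^ 2 ≤ θ * expMoment μ F t := by
    have h := (hPoincare _).trans (dirichletForm_exp_half_le hP hμ hrev hF t)
    rw [hvar] at h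
    rw [show θ * expMoment μ F t = t ^ 2 / 2 * expMoment μ F t / lam by ring,
      le_div_iff₀ hlam]
    linarith
  calc expMoment μ F t ≤ expMoment μ F t * (exp (2 * θ) * (1 - θ)) :=
        le_mul_of_one_le_right (expMoment_nonneg hμ F t)
          (one_le_exp_two_mul_mul_one_sub (by positivity) hθ)
    _ ≤ exp (2 * θ) * expMoment μ F (t / 2) ^ 2 := by
        have := exp_pos (2 * θ)
        nlinarith
    _ = exp (lam⁻¹ * t ^ 2) * expMoment μ F (t / 2) ^ 2 := by
        congr 2
        simp only [θ]
        field_simp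

theorem expMoment_le_exp_two_mul_sq (hmean : ∑ x, μ x * F x = 0) {t : ℝ} (ht : |t| ≤ √lam) :
    expMoment μ F t ≤ exp (2 * lam⁻¹ * t ^ 2) := by
  refine ge_of_tendsto' (by simpa using
    (tendsto_expMoment_div_two_pow_pow hμ hμsum hmean t).const_mul (exp (2 * lam⁻¹ * t ^ 2)))
    fun n => le_exp_mul_pow_of_le_exp_mul_sq (inv_nonneg.2 hlam.le) (expMoment_nonneg hμ F)
      (fun u hu => expMoment_le_exp_mul_expMoment_half_sq hP hμ hμsum hrev hlam hPoincare hF hu)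
      n t ht

end Poincare

end FiniteChain

theorem stmt_5_general {X : Type*} [Fintype X]
    (P : Matrix X X ℝ) (μ : X → ℝ)
    (hPnonneg : ∀ x y, 0 ≤ P x y)
    (hμpos : ∀ x, 0 ≤ μ x) (hμsum : ∑ x, μ x = 1)
    (hrev : ∀ x y, μ x * P x y = μ y * P y x)
    (lam : ℝ) (hlam : 0 < lam)
    (hPoincare : ∀ f : X → ℝ,
      lam * (∑ x, μ x * (f x - ∑ y, μ y * f y) ^ 2) ≤
        (1 / 2) * ∑ x, ∑ y, (f x - f y) ^ 2 * μ x * P x y)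
    (F : X → ℝ)
    (hF : (1 / 2) * (⨆ x, ∑ y, |F x - F y| ^ 2 * P x y) ≤ 1)
    (r : ℝ) :
    ∑ x ∈ univ.filter (fun x => (∑ y, μ y * F y) + r ≤ F x), μ x ≤
      3 * Real.exp (-r * Real.sqrt lam / 2) := by
  set m := ∑ y, μ y * F y
  have hmean : ∑ x, μ x * (F x - m) = 0 := by
    simp only [mul_sub, sum_sub_distrib, ← sum_mul, hμsum]
    ring
  have htriple : ∀ x, ∑ y, ((F x - m) - (F y - m)) ^ 2 * P x y ≤ 2 := by
    simp only [sq_abs] at hF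
    intro x
    simp only [sub_sub_sub_cancel_right]
    linarith [le_ciSup (Set.finite_range fun x => ∑ y, (F x - F y) ^ 2 * P x y).bddAbove x]
  have hs : |√lam / 2| ≤ √lam := by
    rw [abs_of_nonneg (by positivity)]
    linarith [sqrt_nonneg lam]
  have hfilter : univ.filter (fun x => m + r ≤ F x) = univ.filter (fun x => r ≤ F x - m) := by
    simp only [le_sub_iff_add_le']
  calc ∑ x ∈ univ.filter (fun x => m + r ≤ F x), μ x
      ≤ exp (-(√lam / 2 * r)) * expMoment μ (fun x => F x - m) (√lam / 2) := by
        rw [hfilter]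
        exact sum_filter_le_exp_mul_expMoment hμpos _ (by positivity) r
    _ ≤ exp (-(√lam / 2 * r)) * exp (2 * lam⁻¹ * (√lam / 2) ^ 2) := by
        gcongr
        exact expMoment_le_exp_two_mul_sq hPnonneg hμpos hμsum hrev hlam hPoincare htriple hmean hs
    _ = exp (1 / 2) * exp (-r * √lam / 2) := by
        rw [div_pow, sq_sqrt hlam.le, mul_comm]
        congr 2
        · field_simp
        · ring
    _ ≤ 3 * exp (-r * √lam / 2) := by
        gcongr
        calc exp (1 / 2) ≤ exp 1 := exp_le_exp.2 (by norm_num)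
          _ ≤ 3 := by linarith [exp_one_lt_d9]

theorem stmt_5 {X : Type*} [Fintype X] [Nonempty X] [DecidableEq X]
    (P : Matrix X X ℝ) (μ : X → ℝ)
    (hPnonneg : ∀ x y, 0 ≤ P x y)
    (hProw : ∀ x, ∑ y, P x y = 1)
    (hμpos : ∀ x, 0 ≤ μ x) (hμsum : ∑ x, μ x = 1)
    (hrev : ∀ x y, μ x * P x y = μ y * P y x)
    (hirr : ∀ x y : X, ∃ t : ℕ, 0 < t ∧ 0 < (P ^ t) x y)
    (lam : ℝ) (hlam : 0 < lam)
    (hPoincare : ∀ f : X → ℝ,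
      lam * (∑ x, μ x * (f x - ∑ y, μ y * f y) ^ 2) ≤
        (1 / 2) * ∑ x, ∑ y, (f x - f y) ^ 2 * μ x * P x y)
    (F : X → ℝ)
    (hF : (1 / 2) * (⨆ x, ∑ y, |F x - F y| ^ 2 * P x y) ≤ 1)
    (r : ℝ) (hr : 0 ≤ r) :
    ∑ x ∈ univ.filter (fun x => (∑ y, μ y * F y) + r ≤ F x), μ x ≤
      3 * Real.exp (-r * Real.sqrt lam / 2) :=
  stmt_5_general P μ hPnonneg hμpos hμsum hrev lam hlam hPoincare F hF r
end

section
/- Let (\Pi, \mu) be a reversible Markov chain on a finite state space X with Dirichlet form \mathcal{E}. For any function F : X \to \mathbb{R} and \lambda > 0, \mathcal{E}(e^{\lambda F/2}, e^{\lambda F/2}) \le (\lambda^2/2) \||F\||_\infty^2 \int e^{\lambda F} d\mu, where \||F\||_\infty^2 = (1/2) \sup_x \sum_y |F(x) - F(y)|^2 \Pi(x,y). -/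
open Finset

lemma exp_sq_diff_aux (u v : ℝ) :
    (Real.exp u - Real.exp v) ^ 2 ≤ (u - v) ^ 2 * (Real.exp (2 * u) + Real.exp (2 * v)) := by
  wlog h : v ≤ u generalizing u v
  · have h2 := this v u (le_of_not_ge h)
    calc (Real.exp u - Real.exp v) ^ 2 = (Real.exp v - Real.exp u) ^ 2 := by ring
      _ ≤ (v - u) ^ 2 * (Real.exp (2 * v) + Real.exp (2 * u)) := h2
      _ = (u - v) ^ 2 * (Real.exp (2 * u) + Real.exp (2 * v)) := by ring
  have h1 : Real.exp u - Real.exp v ≤ (u - v) * Real.exp u := by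
    have h3 := Real.add_one_le_exp (v - u)
    have h2 : Real.exp v = Real.exp (v - u) * Real.exp u := by
      rw [← Real.exp_add]; ring_nf
    nlinarith [Real.exp_pos u]
  have h0 : 0 ≤ Real.exp u - Real.exp v := by
    have := Real.exp_le_exp.mpr h; linarith
  calc (Real.exp u - Real.exp v) ^ 2 ≤ ((u - v) * Real.exp u) ^ 2 := by nlinarith
    _ = (u - v) ^ 2 * Real.exp (2 * u) := by rw [two_mul, Real.exp_add]; ring
    _ ≤ (u - v) ^ 2 * (Real.exp (2 * u) + Real.exp (2 * v)) :=
      mul_le_mul_of_nonneg_left (le_add_of_nonneg_right (Real.exp_pos _).le) (sq_nonneg _)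

theorem stmt_6 {X : Type*} [Fintype X] [Nonempty X]
    (P : Matrix X X ℝ) (μ : X → ℝ)
    (hPnonneg : ∀ x y, 0 ≤ P x y)
    (hProw : ∀ x, ∑ y, P x y = 1)
    (hμpos : ∀ x, 0 ≤ μ x) (hμsum : ∑ x, μ x = 1)
    (hrev : ∀ x y, μ x * P x y = μ y * P y x)
    (F : X → ℝ) (lam : ℝ) (hlam : 0 < lam) :
    (1 / 2) * ∑ x, ∑ y,
        (Real.exp (lam * F x / 2) - Real.exp (lam * F y / 2)) ^ 2 * μ x * P x y ≤
      (lam ^ 2 / 2) * ((1 / 2) * (⨆ x, ∑ y, |F x - F y| ^ 2 * P x y)) *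
        ∑ x, μ x * Real.exp (lam * F x) := by
  set S := ⨆ x, ∑ y, |F x - F y| ^ 2 * P x y with hS
  have hbdd : BddAbove (Set.range fun x => ∑ y, |F x - F y| ^ 2 * P x y) :=
    (Set.finite_range _).bddAbove
  have hle : ∀ x, ∑ y, |F x - F y| ^ 2 * P x y ≤ S := fun x => le_ciSup hbdd x
  -- Step 1: pointwise bound
  have step1 : ∀ x y,
      (Real.exp (lam * F x / 2) - Real.exp (lam * F y / 2)) ^ 2 * μ x * P x y ≤
      (lam ^ 2 / 4) * (F x - F y) ^ 2 *
        (Real.exp (lam * F x) + Real.exp (lam * F y)) * μ x * P x y := by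
    intro x y
    have h := exp_sq_diff_aux (lam * F x / 2) (lam * F y / 2)
    have h2 : (lam * F x / 2 - lam * F y / 2) ^ 2 = lam ^ 2 / 4 * (F x - F y) ^ 2 := by ring
    have h3 : 2 * (lam * F x / 2) = lam * F x := by ring
    have h4 : 2 * (lam * F y / 2) = lam * F y := by ring
    rw [h2, h3, h4] at h
    have hμP : 0 ≤ μ x * P x y := mul_nonneg (hμpos x) (hPnonneg x y)
    calc (Real.exp (lam * F x / 2) - Real.exp (lam * F y / 2)) ^ 2 * μ x * P x y
        = (Real.exp (lam * F x / 2) - Real.exp (lam * F y / 2)) ^ 2 * (μ x * P x y) := by ring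
      _ ≤ lam ^ 2 / 4 * (F x - F y) ^ 2 * (Real.exp (lam * F x) + Real.exp (lam * F y)) *
            (μ x * P x y) := mul_le_mul_of_nonneg_right h hμP
      _ = (lam ^ 2 / 4) * (F x - F y) ^ 2 *
            (Real.exp (lam * F x) + Real.exp (lam * F y)) * μ x * P x y := by ring
  -- Step 2: symmetrization
  have step2 : ∑ x, ∑ y, (F x - F y) ^ 2 * Real.exp (lam * F y) * (μ x * P x y)
      = ∑ x, ∑ y, (F x - F y) ^ 2 * Real.exp (lam * F x) * (μ x * P x y) := by
    rw [Finset.sum_comm]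
    refine Finset.sum_congr rfl fun y _ => Finset.sum_congr rfl fun x _ => ?_
    rw [hrev]
    ring
  have key : ∑ x, ∑ y,
      (Real.exp (lam * F x / 2) - Real.exp (lam * F y / 2)) ^ 2 * μ x * P x y ≤
      (lam ^ 2 / 2) * ∑ x, ∑ y, (F x - F y) ^ 2 * Real.exp (lam * F x) * (μ x * P x y) := by
    calc ∑ x, ∑ y, (Real.exp (lam * F x / 2) - Real.exp (lam * F y / 2)) ^ 2 * μ x * P x y
        ≤ ∑ x, ∑ y, (lam ^ 2 / 4) * (F x - F y) ^ 2 *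
            (Real.exp (lam * F x) + Real.exp (lam * F y)) * μ x * P x y :=
          Finset.sum_le_sum fun x _ => Finset.sum_le_sum fun y _ => step1 x y
      _ = (lam ^ 2 / 4) * ((∑ x, ∑ y, (F x - F y) ^ 2 * Real.exp (lam * F x) * (μ x * P x y)) +
            ∑ x, ∑ y, (F x - F y) ^ 2 * Real.exp (lam * F y) * (μ x * P x y)) := by
          rw [← Finset.sum_add_distrib, Finset.mul_sum]
          refine Finset.sum_congr rfl fun x _ => ?_
          rw [← Finset.sum_add_distrib, Finset.mul_sum]
          refine Finset.sum_congr rfl fun y _ => ?_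
          ring
      _ = (lam ^ 2 / 2) * ∑ x, ∑ y, (F x - F y) ^ 2 * Real.exp (lam * F x) * (μ x * P x y) := by
          rw [step2]; ring
  -- Step 3: bound inner sum by S
  have step3 : ∑ x, ∑ y, (F x - F y) ^ 2 * Real.exp (lam * F x) * (μ x * P x y)
      ≤ S * ∑ x, μ x * Real.exp (lam * F x) := by
    rw [Finset.mul_sum]
    refine Finset.sum_le_sum fun x _ => ?_
    have : ∑ y, (F x - F y) ^ 2 * Real.exp (lam * F x) * (μ x * P x y)
        = (μ x * Real.exp (lam * F x)) * ∑ y, |F x - F y| ^ 2 * P x y := by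
      rw [Finset.mul_sum]
      refine Finset.sum_congr rfl fun y _ => ?_
      rw [sq_abs]; ring
    rw [this]
    have hnn : 0 ≤ μ x * Real.exp (lam * F x) :=
      mul_nonneg (hμpos x) (Real.exp_pos _).le
    calc (μ x * Real.exp (lam * F x)) * ∑ y, |F x - F y| ^ 2 * P x y
        ≤ (μ x * Real.exp (lam * F x)) * S := mul_le_mul_of_nonneg_left (hle x) hnn
      _ = S * (μ x * Real.exp (lam * F x)) := by ring
  have hfinal := step3
  calc (1 / 2) * ∑ x, ∑ y,
        (Real.exp (lam * F x / 2) - Real.exp (lam * F y / 2)) ^ 2 * μ x * P x y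
      ≤ (1 / 2) * ((lam ^ 2 / 2) *
          ∑ x, ∑ y, (F x - F y) ^ 2 * Real.exp (lam * F x) * (μ x * P x y)) := by
        linarith [key]
    _ ≤ (1 / 2) * ((lam ^ 2 / 2) * (S * ∑ x, μ x * Real.exp (lam * F x))) := by
        have h5 : 0 ≤ lam ^ 2 / 2 := by positivity
        nlinarith [step3]
    _ = (lam ^ 2 / 2) * ((1 / 2) * S) * ∑ x, μ x * Real.exp (lam * F x) := by ring
end

section
/- The infinite product \prod_{k=0}^\infty (1/(1 - 4^{-(k+1)}))^{2^k} converges and is at most 3. -/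
/-!
Each factor is `(1 - x)^(-2^k)` with `x = 4^(-(k+1)) ≤ 1/4`, so its logarithm is at most
`2^k x / (1 - x) ≤ (4/3) 2^k 4^(-(k+1)) = (1/3) 2^(-k)`. The logarithms therefore sum to at most
`2/3`, and the product is at most `e^(2/3) < 3`.
-/

open Real

theorem Real.multipliable_and_tprod_le_exp_tsum_of_log_le {ι : Type*} {f g : ι → ℝ}
    (hf : ∀ i, 1 ≤ f i) (hg : Summable g) (hfg : ∀ i, log (f i) ≤ g i) :
    Multipliable f ∧ ∏' i, f i ≤ exp (∑' i, g i) := by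
  have hpos : ∀ i, 0 < f i := fun i => one_pos.trans_le (hf i)
  have hlog : Summable fun i => log (f i) :=
    hg.of_nonneg_of_le (fun i => log_nonneg (hf i)) hfg
  refine ⟨multipliable_of_summable_log hpos hlog, ?_⟩
  rw [← rexp_tsum_eq_tprod hpos hlog]
  exact exp_le_exp.mpr (hlog.tsum_le_tsum hfg hg)

theorem Real.log_one_div_one_sub_le {x : ℝ} (hx : x < 1) : log (1 / (1 - x)) ≤ x / (1 - x) := by
  have h : 0 < 1 - x := sub_pos.mpr hx
  calc log (1 / (1 - x)) ≤ 1 / (1 - x) - 1 := log_le_sub_one_of_pos (by positivity)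
    _ = x / (1 - x) := by field_simp; ring

theorem four_zpow_neg_succ (k : ℕ) : (4 : ℝ) ^ (-(k + 1 : ℤ)) = (1 / 4) ^ (k + 1) := by
  rw [zpow_neg, one_div_pow, one_div]
  norm_cast

theorem one_le_one_div_one_sub_four_zpow_pow (k : ℕ) :
    1 ≤ (1 / (1 - (4 : ℝ) ^ (-(k + 1 : ℤ)))) ^ (2 ^ k) := by
  rw [four_zpow_neg_succ]
  have h : (0 : ℝ) < (1 / 4) ^ (k + 1) := by positivity
  have h' : ((1 : ℝ) / 4) ^ (k + 1) < 1 := pow_lt_one₀ (by norm_num) (by norm_num) k.succ_ne_zero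
  exact one_le_pow₀ (one_le_one_div (by linarith) (by linarith))

theorem log_one_div_one_sub_four_zpow_pow_le (k : ℕ) :
    log ((1 / (1 - (4 : ℝ) ^ (-(k + 1 : ℤ)))) ^ (2 ^ k)) ≤ 1 / 3 * (1 / 2) ^ k := by
  rw [log_pow, four_zpow_neg_succ]
  set x : ℝ := (1 / 4) ^ (k + 1) with hx
  have hx0 : 0 ≤ x := by positivity
  have hx4 : x ≤ 1 / 4 := pow_le_of_le_one (by norm_num) (by norm_num) k.succ_ne_zero
  have hquot : x / (1 - x) ≤ 4 / 3 * x := by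
    rw [div_le_iff₀ (by linarith)]
    nlinarith
  calc ((2 ^ k : ℕ) : ℝ) * log (1 / (1 - x)) ≤ 2 ^ k * (4 / 3 * x) := by
        push_cast
        gcongr
        exact (log_one_div_one_sub_le (by linarith)).trans hquot
    _ = 1 / 3 * (1 / 2) ^ k := by
        have h2 : (2 : ℝ) ^ k * (1 / 2) ^ k = 1 := by rw [← mul_pow]; norm_num
        rw [hx, pow_succ, show (1 / 4 : ℝ) = 1 / 2 * (1 / 2) by norm_num, mul_pow]
        linear_combination (1 / 3 * (1 / 2 : ℝ) ^ k) * h2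

theorem stmt_7 :
    Multipliable (fun k : ℕ => (1 / (1 - (4:ℝ) ^ (-(k + 1 : ℤ)))) ^ (2 ^ k)) ∧
      ∏' k : ℕ, (1 / (1 - (4:ℝ) ^ (-(k + 1 : ℤ)))) ^ (2 ^ k) ≤ 3 := by
  have hgeom := hasSum_geometric_two.mul_left (1 / 3 : ℝ)
  obtain ⟨hmul, hle⟩ := multipliable_and_tprod_le_exp_tsum_of_log_le
    one_le_one_div_one_sub_four_zpow_pow hgeom.summable log_one_div_one_sub_four_zpow_pow_le
  refine ⟨hmul, hle.trans ?_⟩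
  calc exp (∑' k : ℕ, 1 / 3 * (1 / 2 : ℝ) ^ k) = exp (1 / 3 * 2) := by rw [hgeom.tsum_eq]
    _ ≤ exp 1 := exp_le_exp.mpr (by norm_num)
    _ ≤ 3 := exp_one_lt_d9.le.trans (by norm_num)
end

section
/- Let A and B be k \times k Hermitian matrices with empirical spectral distribution functions F_A and F_B, where F_A(x) = (number of eigenvalues of A that are \le x)/k. Then \sup_x |F_A(x) - F_B(x)| \le rank(A - B)/k. -/
/-!
Let `V` be spanned by the eigenvectors of `A` with eigenvalue `≤ x`, `W` by those of `B` with
eigenvalue `> x`, and `K = ker (A - B)`. A nonzero `v ∈ V ∩ W ∩ K` would satisfy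
`⟪v, A v⟫ ≤ x ‖v‖² < ⟪v, B v⟫ = ⟪v, A v⟫`, so the three subspaces meet trivially and
`dim V + dim W + dim K ≤ 2k`. With `dim W = k - #{λ_B ≤ x}` and `dim K = k - rank (A - B)` this is
`#{λ_A ≤ x} ≤ #{λ_B ≤ x} + rank (A - B)`; exchanging `A` and `B` bounds the difference of the
counts by the rank.
-/

open Finset Module

lemma Submodule.finrank_add_finrank_add_finrank_le_of_inf_eq_bot {K V : Type*} [DivisionRing K]
    [AddCommGroup V] [Module K V] [FiniteDimensional K V] {U₁ U₂ U₃ : Submodule K V}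
    (h : U₁ ⊓ U₂ ⊓ U₃ = ⊥) :
    finrank K U₁ + finrank K U₂ + finrank K U₃ ≤ 2 * finrank K V := by
  have h₁₂ := Submodule.finrank_sup_add_finrank_inf_eq U₁ U₂
  have h₁₂₃ := Submodule.finrank_sup_add_finrank_inf_eq (U₁ ⊓ U₂) U₃
  rw [h, finrank_bot] at h₁₂₃
  have := Submodule.finrank_le (U₁ ⊔ U₂)
  have := Submodule.finrank_le (U₁ ⊓ U₂ ⊔ U₃)
  omega

namespace OrthonormalBasis

open scoped InnerProductSpace

variable {𝕜 ι E : Type*} [RCLike 𝕜] [Fintype ι] [NormedAddCommGroup E] [InnerProductSpace 𝕜 E]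
  (b : OrthonormalBasis ι 𝕜 E)

lemma finrank_span_image (p : ι → Prop) [DecidablePred p] :
    finrank 𝕜 (Submodule.span 𝕜 (b '' {i | p i})) = #{i | p i} := by
  rw [Set.image_eq_range, ← Fintype.card_subtype]
  exact finrank_span_eq_card (b.orthonormal.comp _ Subtype.val_injective).linearIndependent

lemma inner_eq_zero_of_mem_span_image {p : ι → Prop} {v : E}
    (hv : v ∈ Submodule.span 𝕜 (b '' {i | p i})) {i : ι} (hi : ¬ p i) : ⟪b i, v⟫_𝕜 = 0 := by
  suffices Submodule.span 𝕜 (b '' {i | p i}) ≤ (𝕜 ∙ b i)ᗮ from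
    Submodule.mem_orthogonal_singleton_iff_inner_right.mp (this hv)
  rw [Submodule.span_le]
  rintro _ ⟨j, hj, rfl⟩
  exact Submodule.mem_orthogonal_singleton_iff_inner_right.mpr
    (b.orthonormal.2 (ne_of_mem_of_not_mem hj hi).symm)

variable {T : E →ₗ[𝕜] E} {μ : ι → ℝ}

lemma inner_apply_of_apply_eq_smul (hT : ∀ i, T (b i) = (μ i : 𝕜) • b i) (i : ι) (v : E) :
    ⟪b i, T v⟫_𝕜 = μ i * ⟪b i, v⟫_𝕜 := by
  classical
  conv_lhs => rw [← b.sum_repr' v]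
  simp [hT, inner_sum, inner_smul_right, b.inner_eq_ite, mul_comm]

lemma re_inner_self_apply_of_apply_eq_smul (hT : ∀ i, T (b i) = (μ i : 𝕜) • b i) (v : E) :
    RCLike.re ⟪v, T v⟫_𝕜 = ∑ i, μ i * ‖⟪b i, v⟫_𝕜‖ ^ 2 := by
  rw [← b.sum_inner_mul_inner, map_sum]
  refine Finset.sum_congr rfl fun i _ => ?_
  rw [b.inner_apply_of_apply_eq_smul hT, mul_left_comm, ← inner_conj_symm, RCLike.conj_mul]
  norm_cast

lemma re_inner_self_apply_le_of_mem_span (hT : ∀ i, T (b i) = (μ i : 𝕜) • b i) {x : ℝ} {v : E}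
    (hv : v ∈ Submodule.span 𝕜 (b '' {i | μ i ≤ x})) :
    RCLike.re ⟪v, T v⟫_𝕜 ≤ x * ‖v‖ ^ 2 := by
  rw [b.re_inner_self_apply_of_apply_eq_smul hT, ← b.sum_sq_norm_inner_right, mul_sum]
  refine sum_le_sum fun i _ => ?_
  by_cases hi : μ i ≤ x
  · exact mul_le_mul_of_nonneg_right hi (by positivity)
  · simp [b.inner_eq_zero_of_mem_span_image hv hi]

lemma lt_re_inner_self_apply_of_mem_span (hT : ∀ i, T (b i) = (μ i : 𝕜) • b i) {x : ℝ} {v : E}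
    (hv : v ∈ Submodule.span 𝕜 (b '' {i | x < μ i})) (hv₀ : v ≠ 0) :
    x * ‖v‖ ^ 2 < RCLike.re ⟪v, T v⟫_𝕜 := by
  have hcoord (i : ι) (hi : ¬ x < μ i) : ⟪b i, v⟫_𝕜 = 0 :=
    b.inner_eq_zero_of_mem_span_image hv hi
  obtain ⟨j, -, hj⟩ : ∃ j ∈ univ, ‖⟪b j, v⟫_𝕜‖ ^ 2 ≠ 0 := by
    refine exists_ne_zero_of_sum_ne_zero ?_
    rw [b.sum_sq_norm_inner_right]
    positivity
  rw [b.re_inner_self_apply_of_apply_eq_smul hT, ← b.sum_sq_norm_inner_right, mul_sum]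
  refine sum_lt_sum (fun i _ => ?_) ⟨j, mem_univ j, ?_⟩
  · by_cases hi : x < μ i
    · exact mul_le_mul_of_nonneg_right hi.le (by positivity)
    · simp [hcoord i hi]
  · have hj' : x < μ j := by
      by_contra h
      simp [hcoord j h] at hj
    exact mul_lt_mul_of_pos_right hj' (lt_of_le_of_ne (by positivity) (Ne.symm hj))

theorem card_le_card_add_finrank_range_sub (hT : ∀ i, T (b i) = (μ i : 𝕜) • b i)
    (b' : OrthonormalBasis ι 𝕜 E) {S : E →ₗ[𝕜] E} {ν : ι → ℝ}
    (hS : ∀ i, S (b' i) = (ν i : 𝕜) • b' i) (x : ℝ) :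
    #{i | μ i ≤ x} ≤ #{i | ν i ≤ x} + finrank 𝕜 (T - S).range := by
  have : FiniteDimensional 𝕜 E := b.toBasis.finiteDimensional_of_finite
  set V := Submodule.span 𝕜 (b '' {i | μ i ≤ x})
  set W := Submodule.span 𝕜 (b' '' {i | x < ν i})
  have hVWK : V ⊓ W ⊓ (T - S).ker = ⊥ := by
    refine eq_bot_iff.mpr fun v ⟨⟨hvV, hvW⟩, hvK⟩ => (Submodule.mem_bot 𝕜).mpr ?_
    by_contra hv₀
    have hTS : T v = S v := sub_eq_zero.mp hvK
    have hle := b.re_inner_self_apply_le_of_mem_span hT hvV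
    have hlt := b'.lt_re_inner_self_apply_of_mem_span hS hvW hv₀
    rw [hTS] at hle
    linarith
  have hdim := Submodule.finrank_add_finrank_add_finrank_le_of_inf_eq_bot hVWK
  have hrank := (T - S).finrank_range_add_finrank_ker
  rw [b.finrank_span_image, b'.finrank_span_image, finrank_eq_card_basis b.toBasis] at hdim
  rw [finrank_eq_card_basis b.toBasis] at hrank
  have hsplit := card_filter_add_card_filter_not (s := univ) (fun i => ν i ≤ x)
  simp only [not_le, card_univ] at hsplit
  omega

end OrthonormalBasis

namespace Matrix

variable {𝕜 m n : Type*} [RCLike 𝕜] [Fintype n]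

lemma rank_neg {R : Type*} [CommRing R] (M : Matrix m n R) : (-M).rank = M.rank := by
  rw [← neg_one_smul R M]
  exact M.rank_smul_of_mem_nonZeroDivisors (isUnit_neg_one (α := R)).mem_nonZeroDivisors

variable [DecidableEq n]

lemma rank_eq_finrank_range_toEuclideanLin [Fintype m] (M : Matrix m n 𝕜) :
    M.rank = finrank 𝕜 (toEuclideanLin M).range :=
  M.rank_eq_finrank_range_toLin (PiLp.basisFun 2 𝕜 m) (PiLp.basisFun 2 𝕜 n)

lemma IsHermitian.toEuclideanLin_eigenvectorBasis {A : Matrix n n 𝕜} (hA : A.IsHermitian)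
    (i : n) : toEuclideanLin A (hA.eigenvectorBasis i) =
      (hA.eigenvalues i : 𝕜) • hA.eigenvectorBasis i := by
  rw [toLpLin_apply, hA.mulVec_eigenvectorBasis, RCLike.real_smul_eq_coe_smul (K := 𝕜)]
  rfl

theorem IsHermitian.card_eigenvalues_le_le_card_add_rank_sub {A B : Matrix n n 𝕜}
    (hA : A.IsHermitian) (hB : B.IsHermitian) (x : ℝ) :
    #{i | hA.eigenvalues i ≤ x} ≤ #{i | hB.eigenvalues i ≤ x} + (A - B).rank := by
  rw [rank_eq_finrank_range_toEuclideanLin, map_sub]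
  exact hA.eigenvectorBasis.card_le_card_add_finrank_range_sub
    hA.toEuclideanLin_eigenvectorBasis hB.eigenvectorBasis hB.toEuclideanLin_eigenvectorBasis x

end Matrix

theorem stmt_8_general (k : ℕ) (A B : Matrix (Fin k) (Fin k) ℂ)
    (hA : A.IsHermitian) (hB : B.IsHermitian) (x : ℝ) :
    |((univ.filter (fun i => hA.eigenvalues i ≤ x)).card : ℝ) / k -
        ((univ.filter (fun i => hB.eigenvalues i ≤ x)).card : ℝ) / k| ≤
      ((A - B).rank : ℝ) / k := by
  have hAB := hA.card_eigenvalues_le_le_card_add_rank_sub hB x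
  have hBA := hB.card_eigenvalues_le_le_card_add_rank_sub hA x
  rw [← neg_sub, Matrix.rank_neg] at hBA
  rw [div_sub_div_same, abs_div, Nat.abs_cast]
  gcongr
  rw [abs_sub_le_iff, sub_le_iff_le_add', sub_le_iff_le_add']
  exact ⟨mod_cast hAB, mod_cast hBA⟩

theorem stmt_8 (k : ℕ) (hk : 0 < k) (A B : Matrix (Fin k) (Fin k) ℂ)
    (hA : A.IsHermitian) (hB : B.IsHermitian) (x : ℝ) :
    |((univ.filter (fun i => hA.eigenvalues i ≤ x)).card : ℝ) / k -
        ((univ.filter (fun i => hB.eigenvalues i ≤ x)).card : ℝ) / k| ≤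
      ((A - B).rank : ℝ) / k :=
  stmt_8_general k A B hA hB x
end

section
/- Fix \beta \in \mathbb{R}, \beta \ne 0, and for each n let q = e^{-\beta/n} and [n]_q! = \prod_{k=1}^n (1-q^k)/(1-q). Then ln([n]_q!/n!) - n A(\beta) - B(\beta) \to 0 as n \to \infty, where A(\beta) = \int_0^1 ln((1-e^{-\beta y})/(\beta y)) dy and B(\beta) = \beta/2 + (1/2) ln((1-e^{-\beta})/\beta). -/
/-!
With `g = oneSubExpNegDiv`, `g x = (1 - e^{-x}) / x` (smooth, positive, `g 0 = 1`,
`g' 0 = -1/2`) and `F y = log g (β y)`, every factor of the q-factorial is `[k]_q = k g (β k/n) / g (β/n)`, so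
`log ([n]_q! / n!) = ∑_{k=1}^n F (k/n) - n F (1/n)`. The trapezoidal rule for the `C²` function
`F` gives `∑_{k=1}^n F (k/n) = n ∫₀¹ F + (F 1 - F 0) / 2 + O(1/n)`, and `n F (1/n) → F' 0 = -β/2`.
-/

open Finset Filter Real Topology
open scoped ContDiff

lemma exists_abs_iteratedDerivWithin_two_le {f : ℝ → ℝ} {a b : ℝ} (hab : a ≠ b)
    (hf : ContDiffOn ℝ 2 f (Set.uIcc a b)) :
    ∃ ζ, ∀ x, |iteratedDerivWithin 2 f (Set.uIcc a b) x| ≤ ζ := by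
  obtain ⟨ζ, hζ⟩ := isCompact_uIcc.exists_bound_of_continuousOn
    (hf.continuousOn_iteratedDerivWithin le_rfl (uniqueDiffOn_uIcc hab))
  refine ⟨ζ, fun x => ?_⟩
  by_cases hx : x ∈ Set.uIcc a b
  · exact hζ x hx
  · have hx' : x ∉ closure (Set.uIcc a b) := fun h => hx (isClosed_Icc.closure_subset h)
    rw [iteratedDerivWithin_succ, derivWithin_zero_of_notMem_closure hx', abs_zero]
    exact (abs_nonneg _).trans (hζ a Set.left_mem_uIcc)

lemma natCast_mul_trapezoidal_integral_zero_one (f : ℝ → ℝ) {n : ℕ} (hn : 0 < n) :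
    n * trapezoidal_integral f n 0 1 = ∑ k ∈ Icc 1 n, f (k / n) - (f 1 - f 0) / 2 := by
  obtain ⟨m, rfl⟩ := Nat.exists_eq_add_one_of_ne_zero hn.ne'
  have hsum : ∑ k ∈ Icc 1 m, f (k / (m + 1)) = ∑ k ∈ range m, f ((k + 1) / (m + 1)) := by
    have := Finset.sum_Ico_add' (fun k : ℕ => f (k / (m + 1))) 0 m 1
    push_cast at this
    rw [range_eq_Ico, this]
    rfl
  rw [trapezoidal_integral, sum_Icc_succ_top (by omega), Nat.add_sub_cancel]
  push_cast
  rw [hsum, div_self (by positivity)]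
  simp only [zero_add, sub_zero, mul_one]
  field_simp
  ring

theorem tendsto_sum_sub_integral_of_contDiffOn {f : ℝ → ℝ} (hf : ContDiffOn ℝ 2 f (Set.Icc 0 1)) :
    Tendsto (fun n : ℕ => ∑ k ∈ Icc 1 n, f (k / n) - n * (∫ x in (0:ℝ)..1, f x) - (f 1 - f 0) / 2)
      atTop (𝓝 0) := by
  rw [← Set.uIcc_of_le zero_le_one] at hf
  obtain ⟨ζ, hζ⟩ := exists_abs_iteratedDerivWithin_two_le zero_ne_one hf
  refine squeeze_zero_norm' (a := fun n : ℕ => ζ / 12 / n) ?_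
    (tendsto_const_div_atTop_nhds_zero_nat _)
  filter_upwards [eventually_gt_atTop 0] with n hn
  have hn' : (0 : ℝ) < n := by exact_mod_cast hn
  calc ‖∑ k ∈ Icc 1 n, f (k / n) - n * (∫ x in (0:ℝ)..1, f x) - (f 1 - f 0) / 2‖
      = |n * trapezoidal_error f n 0 1| := by
        rw [Real.norm_eq_abs, trapezoidal_error, mul_sub,
          natCast_mul_trapezoidal_integral_zero_one f hn]
        congr 1
        ring
    _ = n * |trapezoidal_error f n 0 1| := by rw [abs_mul, abs_of_pos hn']
    _ ≤ n * (|1 - 0| ^ 3 * ζ / (12 * n ^ 2)) := by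
        gcongr
        exact trapezoidal_error_le_of_c2 hf hζ hn
    _ = ζ / 12 / n := by field_simp; simp

lemma tendsto_natCast_mul_apply_inv {f : ℝ → ℝ} {f' : ℝ} (hf : HasDerivAt f f' 0)
    (h0 : f 0 = 0) : Tendsto (fun n : ℕ => n * f (n⁻¹)) atTop (𝓝 f') := by
  have hinv : Tendsto (fun n : ℕ => (n : ℝ)⁻¹) atTop (𝓝[≠] 0) :=
    tendsto_nhdsWithin_iff.2 ⟨tendsto_inv_atTop_nhds_zero_nat,
      eventually_gt_atTop 0 |>.mono fun n hn => by simp [hn.ne']⟩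
  refine ((hasDerivAt_iff_tendsto_slope_zero.1 hf).comp hinv).congr fun n => ?_
  simp [h0]

noncomputable def oneSubExpNegDiv (x : ℝ) : ℝ := if x = 0 then 1 else (1 - exp (-x)) / x

lemma oneSubExpNegDiv_zero : oneSubExpNegDiv 0 = 1 := if_pos rfl

lemma oneSubExpNegDiv_of_ne_zero {x : ℝ} (hx : x ≠ 0) :
    oneSubExpNegDiv x = (1 - exp (-x)) / x := if_neg hx

lemma mul_oneSubExpNegDiv (x : ℝ) : x * oneSubExpNegDiv x = 1 - exp (-x) := by
  rcases eq_or_ne x 0 with rfl | hx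
  · simp
  · rw [oneSubExpNegDiv_of_ne_zero hx, mul_div_cancel₀ _ hx]

lemma oneSubExpNegDiv_pos (x : ℝ) : 0 < oneSubExpNegDiv x := by
  rcases lt_trichotomy x 0 with hx | rfl | hx
  · rw [oneSubExpNegDiv_of_ne_zero hx.ne]
    exact div_pos_of_neg_of_neg (by simpa using hx) hx
  · simp [oneSubExpNegDiv_zero]
  · rw [oneSubExpNegDiv_of_ne_zero hx.ne']
    exact div_pos (by simpa using hx) hx

-- at `x = 0` both sides vanish only because `log 0 = 0`
lemma log_one_sub_exp_neg_div (x : ℝ) : log ((1 - exp (-x)) / x) = log (oneSubExpNegDiv x) := by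
  rcases eq_or_ne x 0 with rfl | hx
  · simp [oneSubExpNegDiv_zero]
  · rw [oneSubExpNegDiv_of_ne_zero hx]

lemma contDiff_oneSubExpNegDiv {n : WithTop ℕ∞} : ContDiff ℝ n oneSubExpNegDiv := by
  -- restriction of an entire function, by the removable singularity theorem
  have hG : Differentiable ℂ (dslope (fun z : ℂ => 1 - Complex.exp (-z)) 0) := fun z =>
    ((Complex.differentiableOn_dslope univ_mem).2 (by fun_prop) z trivial).differentiableAt
      univ_mem
  have hre : oneSubExpNegDiv =
      fun x : ℝ => (dslope (fun z : ℂ => 1 - Complex.exp (-z)) 0 x).re := by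
    ext x
    rcases eq_or_ne x 0 with rfl | hx
    · have : HasDerivAt (fun z : ℂ => 1 - Complex.exp (-z)) 1 0 := by
        simpa using ((Complex.hasDerivAt_exp _).comp 0 (hasDerivAt_neg (0:ℂ))).const_sub 1
      simp [oneSubExpNegDiv_zero, dslope_same, this.deriv]
    · rw [oneSubExpNegDiv_of_ne_zero hx, dslope_of_ne _ (by exact_mod_cast hx), slope_def_field]
      simp only [neg_zero, Complex.exp_zero, sub_self, sub_zero, Complex.div_ofReal_re,
        Complex.sub_re, Complex.one_re]
      rw [← Complex.ofReal_neg, Complex.exp_ofReal_re]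
  rw [hre]
  exact Complex.reCLM.contDiff.comp
    ((hG.contDiff.restrict_scalars ℝ).comp Complex.ofRealCLM.contDiff)

lemma hasDerivAt_exp_neg (x : ℝ) : HasDerivAt (fun x => exp (-x)) (-exp (-x)) x := by
  simpa using (hasDerivAt_neg x).exp

lemma deriv_oneSubExpNegDiv_zero : deriv oneSubExpNegDiv 0 = -1 / 2 := by
  obtain ⟨hg, hg'⟩ := contDiff_infty_iff_deriv.1 (contDiff_oneSubExpNegDiv (n := ∞))
  -- differentiate `x * oneSubExpNegDiv x = 1 - exp (-x)` twice at `0`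
  have h1 : ∀ x, oneSubExpNegDiv x + x * deriv oneSubExpNegDiv x = exp (-x) := fun x => by
    have h : HasDerivAt (fun x => x * oneSubExpNegDiv x) _ x :=
      (hasDerivAt_id' x).mul (hg x).hasDerivAt
    rw [funext mul_oneSubExpNegDiv] at h
    linarith [h.unique ((hasDerivAt_exp_neg x).const_sub 1)]
  have h2 : HasDerivAt (fun x => oneSubExpNegDiv x + x * deriv oneSubExpNegDiv x) _ 0 :=
    (hg 0).hasDerivAt.add ((hasDerivAt_id' 0).mul (hg'.differentiable (by simp) 0).hasDerivAt)
  rw [funext h1] at h2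
  have := h2.unique (hasDerivAt_exp_neg 0)
  rw [neg_zero, exp_zero] at this
  linarith

lemma contDiff_log_oneSubExpNegDiv_const_mul (β : ℝ) {n : WithTop ℕ∞} :
    ContDiff ℝ n fun y => log (oneSubExpNegDiv (β * y)) :=
  (contDiff_oneSubExpNegDiv.comp (contDiff_const.mul contDiff_id)).log
    fun _ => (oneSubExpNegDiv_pos _).ne'

lemma hasDerivAt_log_oneSubExpNegDiv_const_mul (β : ℝ) :
    HasDerivAt (fun y => log (oneSubExpNegDiv (β * y))) (-β / 2) 0 := by
  refine ((((contDiff_oneSubExpNegDiv (n := 1)).differentiable one_ne_zero _).hasDerivAt.comp 0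
    ((hasDerivAt_id' 0).const_mul β)).log (by simp [oneSubExpNegDiv_zero])).congr_deriv ?_
  simp only [mul_zero, mul_one, Function.comp_apply, deriv_oneSubExpNegDiv_zero,
    oneSubExpNegDiv_zero]
  ring

lemma one_sub_exp_neg_pow_div (k : ℕ) {x : ℝ} (hx : x ≠ 0) :
    (1 - exp (-x) ^ k) / (1 - exp (-x)) = k * (oneSubExpNegDiv (k * x) / oneSubExpNegDiv x) := by
  rw [← exp_nat_mul, mul_neg, ← mul_oneSubExpNegDiv, ← mul_oneSubExpNegDiv]
  have := (oneSubExpNegDiv_pos x).ne'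
  field_simp

lemma log_prod_one_sub_exp_neg_pow_div_factorial (n : ℕ) {x : ℝ} (hx : x ≠ 0) :
    log ((∏ k ∈ Icc 1 n, (1 - exp (-x) ^ k) / (1 - exp (-x))) / (Nat.factorial n : ℝ)) =
      ∑ k ∈ Icc 1 n, log (oneSubExpNegDiv (k * x)) - n * log (oneSubExpNegDiv x) := by
  have hpos : ∀ k ∈ Icc 1 n, 0 < oneSubExpNegDiv (k * x) / oneSubExpNegDiv x := fun k _ =>
    div_pos (oneSubExpNegDiv_pos _) (oneSubExpNegDiv_pos _)
  have hfact : (Nat.factorial n : ℝ) = ∏ k ∈ Icc 1 n, (k : ℝ) := by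
    rw [← Nat.cast_prod, ← Finset.prod_Ico_id_eq_factorial, Finset.Ico_add_one_right_eq_Icc]
  rw [prod_congr rfl fun k _ => one_sub_exp_neg_pow_div k hx, prod_mul_distrib, hfact,
    mul_div_cancel_left₀ _ (prod_ne_zero_iff.2 fun k hk => by
      have := (mem_Icc.1 hk).1; positivity),
    log_prod fun k hk => (hpos k hk).ne']
  simp only [log_div (oneSubExpNegDiv_pos _).ne' (oneSubExpNegDiv_pos _).ne', sum_sub_distrib,
    sum_const, Nat.card_Icc, Nat.add_sub_cancel, nsmul_eq_mul]

theorem stmt_10 (β : ℝ) (hβ : β ≠ 0) :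
    Tendsto (fun n : ℕ =>
        Real.log ((∏ k ∈ Icc 1 n, (1 - Real.exp (-β / n) ^ k) / (1 - Real.exp (-β / n)))
            / (Nat.factorial n : ℝ))
          - n * (∫ y in (0:ℝ)..1, Real.log ((1 - Real.exp (-β * y)) / (β * y)))
          - (β / 2 + (1 / 2) * Real.log ((1 - Real.exp (-β)) / β)))
      atTop (nhds 0) := by
  have hlim := (tendsto_sum_sub_integral_of_contDiffOn
      (contDiff_log_oneSubExpNegDiv_const_mul β).contDiffOn).sub
    ((tendsto_natCast_mul_apply_inv (hasDerivAt_log_oneSubExpNegDiv_const_mul β)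
      (by simp [oneSubExpNegDiv_zero])).sub_const (-β / 2))
  rw [sub_self, sub_zero] at hlim
  refine hlim.congr' ?_
  filter_upwards [eventually_ne_atTop 0] with n hn
  have hsum : ∑ k ∈ Icc 1 n, log (oneSubExpNegDiv (k * (β / n))) =
      ∑ k ∈ Icc 1 n, log (oneSubExpNegDiv (β * (k / n))) :=
    sum_congr rfl fun k _ => by rw [mul_div_left_comm]
  rw [neg_div (n : ℝ) β, log_prod_one_sub_exp_neg_pow_div_factorial n
    (div_ne_zero hβ (Nat.cast_ne_zero.2 hn)), hsum]
  simp_rw [neg_mul, log_one_sub_exp_neg_div, mul_zero, oneSubExpNegDiv_zero, log_one, mul_one,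
    div_eq_mul_inv]
  ring
end

section
/- Define \lambda_n^{\pm} = (N/2)( r^2 + (n+1)/N \pm \sqrt{ ((n+1)/N - r^2)^2 + 4 r^2/N } ) for 0 \le n \le N-2 and r > 0. Then lim_{N \to \infty} (1/N) \sum_{n=0}^{N-2} ln(\lambda_n^+ / N) = \int_0^1 ln(max\{r^2, t\}) dt, which equals r^2 - 1 if 0 < r \le 1 and ln(r^2) if r \ge 1. -/
/-!
With `t = (n + 1) / N`, the quantity `λₙ⁺ / N = (r² + t + √((t - r²)² + 4r²/N)) / 2` lies between
`max (r², t)` and `max (r², t) + r / √N`, so `log (λₙ⁺ / N) = log (max (r², t)) + O(1 / (r √N))`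
uniformly in `n`. The average of `log (max (r², (n + 1) / N))` is a Riemann sum of a monotone
function, squeezed between its integrals over `[0, 1 - 1/N]` and `[1/N, 1]`.
-/

open Finset Filter Real

theorem max_le_add_add_sqrt_div_two (a b : ℝ) {c : ℝ} (hc : 0 ≤ c) :
    max a b ≤ (a + b + √((b - a) ^ 2 + c)) / 2 := by
  have h : |b - a| ≤ √((b - a) ^ 2 + c) := Real.abs_le_sqrt (by linarith)
  exact max_le (by linarith [neg_le_abs (b - a)]) (by linarith [le_abs_self (b - a)])

theorem add_add_sqrt_div_two_le (a b : ℝ) {c : ℝ} (hc : 0 ≤ c) :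
    (a + b + √((b - a) ^ 2 + c)) / 2 ≤ max a b + √c / 2 := by
  have hsqrt : √((b - a) ^ 2 + c) ≤ |b - a| + √c := by
    rw [Real.sqrt_le_iff]
    refine ⟨by positivity, ?_⟩
    nlinarith [sq_abs (b - a), Real.sq_sqrt hc, mul_nonneg (abs_nonneg (b - a)) (Real.sqrt_nonneg c)]
  linarith [max_sub_min_eq_abs' b a, min_add_max b a, max_comm a b]

theorem Real.log_add_le_log_add_div {x ε : ℝ} (hx : 0 < x) (hε : 0 ≤ ε) :
    log (x + ε) ≤ log x + ε / x := by
  have hxε : x + ε = x * (1 + ε / x) := by field_simp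
  rw [hxε, Real.log_mul hx.ne' (by positivity)]
  linarith [Real.log_le_sub_one_of_pos (by positivity : 0 < 1 + ε / x)]

section RiemannSum

variable {f : ℝ → ℝ} {N : ℕ}

theorem Monotone.integral_le_riemann_sum (hf : Monotone f) (hN : 1 ≤ N) :
    ∫ t in (0 : ℝ)..1 - 1 / N, f t ≤ 1 / (N : ℝ) * ∑ n ∈ range (N - 1), f ((n + 1) / N) := by
  have hN0 : (0 : ℝ) < N := by exact_mod_cast hN
  have hg : Monotone fun x => f (x / N) := hf.comp fun x y hxy => by gcongr
  have h := (hg.monotoneOn (Set.Icc 0 (0 + ((N - 1 : ℕ) : ℝ)))).integral_le_sum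
  rw [intervalIntegral.integral_comp_div f hN0.ne', Nat.cast_sub hN] at h
  simp only [zero_add, zero_div, smul_eq_mul, Nat.cast_add, Nat.cast_one] at h
  rw [show ((N : ℝ) - 1) / N = 1 - 1 / N by field_simp, ← le_div_iff₀' hN0] at h
  rwa [one_div_mul_eq_div]

theorem Monotone.riemann_sum_le_integral (hf : Monotone f) (hN : 1 ≤ N) :
    1 / (N : ℝ) * ∑ n ∈ range (N - 1), f ((n + 1) / N) ≤ ∫ t in 1 / (N : ℝ)..1, f t := by
  have hN0 : (0 : ℝ) < N := by exact_mod_cast hN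
  have hg : Monotone fun x => f (x / N) := hf.comp fun x y hxy => by gcongr
  have h := (hg.monotoneOn (Set.Icc 1 (1 + ((N - 1 : ℕ) : ℝ)))).sum_le_integral
  rw [intervalIntegral.integral_comp_div f hN0.ne', Nat.cast_sub hN] at h
  simp only [smul_eq_mul, Nat.cast_one, add_comm (1 : ℝ)] at h
  rw [sub_add_cancel, div_self hN0.ne'] at h
  rw [one_div_mul_eq_div, div_le_iff₀' hN0]
  exact h

theorem Monotone.tendsto_riemann_sum (hf : Monotone f) :
    Tendsto (fun N : ℕ => 1 / (N : ℝ) * ∑ n ∈ range (N - 1), f ((n + 1) / N)) atTop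
      (nhds (∫ t in (0 : ℝ)..1, f t)) := by
  have hint : ∀ a b : ℝ, IntervalIntegrable f MeasureTheory.volume a b :=
    fun _ _ => hf.intervalIntegrable
  have hF := intervalIntegral.continuous_primitive hint 0
  have hmesh : Tendsto (fun N : ℕ => 1 / (N : ℝ)) atTop (nhds 0) :=
    tendsto_one_div_atTop_nhds_zero_nat
  have hlower : Tendsto (fun N : ℕ => ∫ t in (0 : ℝ)..1 - 1 / N, f t) atTop
      (nhds (∫ t in (0 : ℝ)..1, f t)) := by
    have hmesh' := hmesh.const_sub 1
    rw [sub_zero] at hmesh'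
    exact (hF.tendsto 1).comp hmesh'
  have hupper : Tendsto (fun N : ℕ => ∫ t in 1 / (N : ℝ)..1, f t) atTop
      (nhds (∫ t in (0 : ℝ)..1, f t)) := by
    have h := (tendsto_const_nhds (x := ∫ t in (0 : ℝ)..1, f t)).sub ((hF.tendsto 0).comp hmesh)
    rw [intervalIntegral.integral_same, sub_zero] at h
    exact h.congr fun N => intervalIntegral.integral_interval_sub_left (hint 0 1) (hint 0 _)
  exact tendsto_of_tendsto_of_tendsto_of_le_of_le' hlower hupper
    (eventually_ge_atTop 1 |>.mono fun N hN => hf.integral_le_riemann_sum hN)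
    (eventually_ge_atTop 1 |>.mono fun N hN => hf.riemann_sum_le_integral hN)

end RiemannSum

theorem tendsto_average_of_le_of_le_add {u v : ℕ → ℕ → ℝ} {δ : ℕ → ℝ} {L : ℝ}
    (hv : Tendsto (fun N : ℕ => 1 / (N : ℝ) * ∑ n ∈ range (N - 1), v N n) atTop (nhds L))
    (hδ : Tendsto δ atTop (nhds 0)) (hδ0 : ∀ N, 0 ≤ δ N)
    (huv : ∀ᶠ N in atTop, ∀ n ∈ range (N - 1), v N n ≤ u N n ∧ u N n ≤ v N n + δ N) :
    Tendsto (fun N : ℕ => 1 / (N : ℝ) * ∑ n ∈ range (N - 1), u N n) atTop (nhds L) := by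
  refine tendsto_of_tendsto_of_tendsto_of_le_of_le' hv (by simpa only [add_zero] using hv.add hδ) ?_ ?_
  · filter_upwards [huv] with N hN
    gcongr with n hn
    exact (hN n hn).1
  · filter_upwards [huv, eventually_ge_atTop 1] with N hN hN1
    have hN0 : (0 : ℝ) < N := by exact_mod_cast hN1
    have hcard : ((N - 1 : ℕ) : ℝ) ≤ N := by exact_mod_cast N.sub_le 1
    calc 1 / (N : ℝ) * ∑ n ∈ range (N - 1), u N n
        ≤ 1 / (N : ℝ) * ∑ n ∈ range (N - 1), (v N n + δ N) := by
          gcongr with n hn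
          exact (hN n hn).2
      _ = 1 / (N : ℝ) * ∑ n ∈ range (N - 1), v N n + ((N - 1 : ℕ) : ℝ) / N * δ N := by
          rw [sum_add_distrib, sum_const, card_range, nsmul_eq_mul]
          ring
      _ ≤ 1 / (N : ℝ) * ∑ n ∈ range (N - 1), v N n + δ N := by
          gcongr
          exact mul_le_of_le_one_left (hδ0 N) ((div_le_one hN0).2 hcard)

/-- The larger eigenvalue of the transfer matrix `[[0, 1], [-N n r², N r² + n + 1]]`. -/
noncomputable def lambdaPlus (N : ℕ) (r : ℝ) (n : ℕ) : ℝ :=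
  (N / 2) * (r ^ 2 + ((n : ℝ) + 1) / N + √((((n : ℝ) + 1) / N - r ^ 2) ^ 2 + 4 * r ^ 2 / N))

section LambdaPlus

variable {N : ℕ} {r : ℝ} (n : ℕ)

theorem lambdaPlus_div (hN : N ≠ 0) :
    lambdaPlus N r n / N =
      (r ^ 2 + ((n : ℝ) + 1) / N + √((((n : ℝ) + 1) / N - r ^ 2) ^ 2 + 4 * r ^ 2 / N)) / 2 := by
  have hN0 : (N : ℝ) ≠ 0 := by exact_mod_cast hN
  have key (X : ℝ) : (N : ℝ) / 2 * X / N = X / 2 := by field_simp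
  exact key _

theorem log_max_le_log_lambdaPlus_div (hr : 0 < r) (hN : 0 < N) :
    log (max (r ^ 2) ((n + 1) / N)) ≤ log (lambdaPlus N r n / N) := by
  rw [lambdaPlus_div n hN.ne']
  exact Real.log_le_log (by positivity) (max_le_add_add_sqrt_div_two _ _ (by positivity))

theorem log_lambdaPlus_div_le (hr : 0 < r) (hN : 0 < N) :
    log (lambdaPlus N r n / N) ≤ log (max (r ^ 2) ((n + 1) / N)) + 1 / (r * √N) := by
  set m := max (r ^ 2) (((n : ℝ) + 1) / N)
  have hm : r ^ 2 ≤ m := le_max_left _ _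
  have hsqrt : √(4 * r ^ 2 / N) / 2 = r / √N := by
    rw [show 4 * r ^ 2 = (2 * r) ^ 2 by ring, Real.sqrt_div' _ (by positivity),
      Real.sqrt_sq (by positivity)]
    ring
  calc log (lambdaPlus N r n / N)
      ≤ log (m + r / √N) := by
        rw [lambdaPlus_div n hN.ne', ← hsqrt]
        exact Real.log_le_log (by positivity) (add_add_sqrt_div_two_le _ _ (by positivity))
    _ ≤ log m + r / √N / m := Real.log_add_le_log_add_div (by positivity) (by positivity)
    _ ≤ log m + r / √N / r ^ 2 := by gcongr
    _ = log m + 1 / (r * √N) := by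
        have : √(N : ℝ) ≠ 0 := by positivity
        field_simp

end LambdaPlus

theorem monotone_log_max {a : ℝ} (ha : 0 < a) : Monotone fun t => log (max a t) :=
  fun _ _ hxy => Real.log_le_log (by positivity) (max_le_max le_rfl hxy)

theorem integral_log_max_of_le_one {a : ℝ} (ha0 : 0 < a) (ha1 : a ≤ 1) :
    ∫ t in (0 : ℝ)..1, log (max a t) = a - 1 := by
  have hint (b c : ℝ) : IntervalIntegrable (fun t => log (max a t)) MeasureTheory.volume b c :=
    (monotone_log_max ha0).intervalIntegrable
  have hconst : ∫ t in (0 : ℝ)..a, log (max a t) = a * log a := by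
    rw [intervalIntegral.integral_congr (g := fun _ => log a) fun t ht => ?_]
    · simp
    · rw [Set.uIcc_of_le ha0.le] at ht
      simp only [max_eq_left ht.2]
  have hlog : ∫ t in a..1, log (max a t) = -(a * log a) - 1 + a := by
    rw [intervalIntegral.integral_congr (g := log) fun t ht => ?_, integral_log, Real.log_one]
    · ring
    · rw [Set.uIcc_of_le ha1] at ht
      simp only [max_eq_right ht.1]
  rw [← intervalIntegral.integral_add_adjacent_intervals (hint 0 a) (hint a 1), hconst, hlog]
  ring

theorem integral_log_max_of_one_le {a : ℝ} (ha : 1 ≤ a) :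
    ∫ t in (0 : ℝ)..1, log (max a t) = log a := by
  rw [intervalIntegral.integral_congr (g := fun _ => log a) fun t ht => ?_]
  · simp
  · rw [Set.uIcc_of_le zero_le_one] at ht
    simp only [max_eq_left (ht.2.trans ha)]

theorem stmt_17 (r : ℝ) (hr : 0 < r) :
    Tendsto (fun N : ℕ =>
        (1 / (N : ℝ)) * ∑ n ∈ range (N - 1),
          Real.log ((((N : ℝ) / 2) *
              (r ^ 2 + ((n : ℝ) + 1) / N +
                Real.sqrt ((((n : ℝ) + 1) / N - r ^ 2) ^ 2 + 4 * r ^ 2 / N))) / N))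
        atTop (nhds (∫ t in (0:ℝ)..1, Real.log (max (r ^ 2) t))) ∧
      (r ≤ 1 → (∫ t in (0:ℝ)..1, Real.log (max (r ^ 2) t)) = r ^ 2 - 1) ∧
      (1 ≤ r → (∫ t in (0:ℝ)..1, Real.log (max (r ^ 2) t)) = Real.log (r ^ 2)) := by
  have hr2 : 0 < r ^ 2 := by positivity
  refine ⟨?_, fun hr1 => integral_log_max_of_le_one hr2 (by nlinarith),
    fun hr1 => integral_log_max_of_one_le (by nlinarith)⟩
  have herror : Tendsto (fun N : ℕ => 1 / (r * √N)) atTop (nhds 0) := by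
    have h := (Real.tendsto_sqrt_atTop.comp tendsto_natCast_atTop_atTop).const_mul_atTop hr
    exact (tendsto_inv_atTop_zero.comp h).congr fun N => (one_div _).symm
  exact tendsto_average_of_le_of_le_add (u := fun N n => log (lambdaPlus N r n / N))
    (monotone_log_max hr2).tendsto_riemann_sum herror (fun N => by positivity)
    (eventually_gt_atTop 0 |>.mono fun N hN n _ =>
      ⟨log_max_le_log_lambdaPlus_div n hr hN, log_lambdaPlus_div_le n hr hN⟩)
end
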